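/- arXiv:1308.0814 — 2 statements merged into one kernel-verified Lean document; each statement's English description precedes it below -/
import Mathlib

section
/- Let f, g : ℝ² → ℝ be nonzero polynomials of degree at most 4 with no common irreducible factor. Then the set {(x,y) : f(x,y) = 0 and g(x,y) = 0} has at most 16 elements. -/
/-!
Dimension count (the classical proof of the affine Bézout bound). Let `V m` be the space of
bivariate polynomials of degree `≤ m`, of dimension `(m + 2).choose 2`, and let `n ≥ d + e`,
where `d, e` are the degrees of `f, g`. If `S` is a set of at most `n + 1` common zeros, then
evaluation `V n → K^S` is surjective (products of lines interpolate), and it vanishes on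
`A + B` with `A = f • V (n - d)`, `B = g • V (n - e)`. Coprimality gives
`A ∩ B ⊆ f g • V (n - d - e)`, so
`|S| ≤ dim V n - dim A - dim B + dim (A ∩ B) ≤ d e`. Applying this to a subset of `d e + 1`
common zeros shows there are at most `d e` of them.
-/

open MvPolynomial Finset Module

theorem Nat.sum_range_add_sub_one_choose (r m : ℕ) :
    ∑ k ∈ range (m + 1), (r + k - 1).choose k = (r + m).choose m := by
  induction m with
  | zero => simp
  | succ m ih =>
    rw [sum_range_succ, ih, show r + (m + 1) - 1 = r + m by omega, ← add_assoc,
      Nat.choose_succ_succ', add_comm]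

theorem Nat.two_add_choose_mixed_difference (k d e : ℕ) :
    (2 + (k + d + e)).choose (k + d + e) + (2 + k).choose k =
      (2 + (k + d)).choose (k + d) + (2 + (k + e)).choose (k + e) + d * e := by
  have h : ∀ m : ℕ, ((2 + m).choose m : ℚ) = (2 + m) * (1 + m) / 2 := by
    intro m
    rw [← Nat.choose_symm_add, Nat.cast_choose_two]
    push_cast; ring
  qify
  simp only [h]
  push_cast
  ring

theorem Submodule.finrank_add_finrank_le_of_map_eq_top {K M N : Type*} [Field K]
    [AddCommGroup M] [Module K M] [AddCommGroup N] [Module K N] {φ : M →ₗ[K] N}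
    {W U : Submodule K M} [FiniteDimensional K U] (hWU : W ≤ U) (hW : W ≤ LinearMap.ker φ)
    (hU : U.map φ = ⊤) : finrank K W + finrank K N ≤ finrank K U := by
  have hker : finrank K W ≤ finrank K (LinearMap.ker (φ.domRestrict U)) := by
    rw [LinearMap.ker_domRestrict, ← (Submodule.comapSubtypeEquivOfLe hWU).finrank_eq]
    exact Submodule.finrank_mono (Submodule.comap_mono hW)
  have := LinearMap.finrank_range_add_finrank_ker (φ.domRestrict U)
  rw [LinearMap.range_domRestrict, hU, finrank_top] at this
  omega

namespace MvPolynomial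

variable {σ K : Type*} [Field K]

theorem finrank_restrictTotalDegree [Fintype σ] (m : ℕ) :
    finrank K (restrictTotalDegree σ K m) = (Fintype.card σ + m).choose m := by
  classical
  have hexp : {n : σ →₀ ℕ | (n.sum fun _ e => e) ≤ m} =
      ↑((range (m + 1)).biUnion fun k => (univ : Finset σ).finsuppAntidiag k) := by
    ext n
    simp only [Set.mem_ofPred_eq, coe_biUnion, coe_range, Set.mem_Iio, mem_coe,
      mem_finsuppAntidiag', subset_univ, and_true, Set.mem_iUnion, exists_prop]
    exact ⟨fun h => ⟨_, by omega, rfl⟩, fun ⟨k, hk, h⟩ => by omega⟩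
  rw [restrictTotalDegree, finrank_eq_nat_card_basis (basisRestrictSupport K _), hexp,
    Nat.card_coe_set_eq, Set.ncard_coe_finset, card_biUnion]
  · simp_rw [card_finsuppAntidiag_nat_eq_choose, card_univ]
    exact Nat.sum_range_add_sub_one_choose _ _
  · intro k _ l _ hkl
    simp only [Function.onFun, disjoint_left, mem_finsuppAntidiag']
    exact fun n hk hl => hkl (hk.1.symm.trans hl.1)

theorem exists_totalDegree_le_eval_eq_one_and_eq_zero (s : σ → K) (T : Finset (σ → K))
    (hs : s ∉ T) : ∃ p : MvPolynomial σ K, p.totalDegree ≤ T.card ∧ eval s p = 1 ∧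
      ∀ t ∈ T, eval t p = 0 := by
  have hline : ∀ t : σ → K, t ≠ s → ∃ ℓ : MvPolynomial σ K,
      ℓ.totalDegree ≤ 1 ∧ eval t ℓ = 0 ∧ eval s ℓ ≠ 0 := by
    intro t hts
    obtain ⟨i, hi⟩ := Function.ne_iff.mp hts
    exact ⟨X i - C (t i), (totalDegree_sub_C_le _ _).trans (totalDegree_X i).le,
      by simp, by simpa [sub_eq_zero] using hi.symm⟩
  choose! ℓ hℓdeg hℓt hℓs using hline
  have hne : ∀ t ∈ T, t ≠ s := fun t ht hts => hs (hts ▸ ht)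
  set P := ∏ t ∈ T, ℓ t
  have hPs : eval s P ≠ 0 := by
    simpa [P, map_prod, prod_ne_zero_iff] using fun t ht => hℓs t (hne t ht)
  refine ⟨(eval s P)⁻¹ • P, ?_, by simp [hPs], fun t ht => ?_⟩
  · calc ((eval s P)⁻¹ • P).totalDegree ≤ P.totalDegree := totalDegree_smul_le _ _
      _ ≤ ∑ t ∈ T, (ℓ t).totalDegree := totalDegree_finsetProd _ _
      _ ≤ ∑ _t ∈ T, 1 := sum_le_sum fun t ht => hℓdeg t (hne t ht)
      _ = T.card := by simp
  · rw [smul_eval, map_prod (eval t), prod_eq_zero ht (hℓt t (hne t ht)), mul_zero]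

noncomputable def evalOn (S : Finset (σ → K)) : MvPolynomial σ K →ₗ[K] S → K :=
  LinearMap.funLeft K K ((↑) : S → σ → K) ∘ₗ evalₗ K σ

@[simp] theorem evalOn_apply (S : Finset (σ → K)) (p : MvPolynomial σ K) (s : S) :
    evalOn S p s = eval (s : σ → K) p := rfl

theorem map_evalOn_restrictTotalDegree {S : Finset (σ → K)} {n : ℕ} (hS : S.card ≤ n + 1) :
    (restrictTotalDegree σ K n).map (evalOn S) = ⊤ := by
  classical
  refine eq_top_iff.mpr fun v _ => ?_
  rw [← univ_sum_single v]
  refine Submodule.sum_mem _ fun s _ => ?_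
  obtain ⟨p, hdeg, hps, hpt⟩ := exists_totalDegree_le_eval_eq_one_and_eq_zero (s : σ → K)
    (S.erase s) (notMem_erase _ _)
  refine ⟨v s • p, Submodule.smul_mem _ _ ((mem_restrictTotalDegree _ _ _).mpr ?_), ?_⟩
  · have := card_erase_of_mem s.2
    omega
  · ext t
    by_cases hts : t = s
    · subst hts; simp [hps]
    · simp [hts, hpt t (mem_erase.mpr ⟨Subtype.coe_ne_coe.mpr hts, t.2⟩)]

theorem card_le_totalDegree_mul_of_card_le_succ {f g : MvPolynomial (Fin 2) K} (hf : f ≠ 0)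
    (hg : g ≠ 0) (hfg : IsRelPrime f g) {S : Finset (Fin 2 → K)}
    (hS : ∀ s ∈ S, eval s f = 0 ∧ eval s g = 0) {n : ℕ}
    (hn : f.totalDegree + g.totalDegree ≤ n) (hSn : S.card ≤ n + 1) :
    S.card ≤ f.totalDegree * g.totalDegree := by
  set d := f.totalDegree
  set e := g.totalDegree
  obtain ⟨k, rfl⟩ : ∃ k, n = k + d + e := ⟨n - d - e, by omega⟩
  let A := (restrictTotalDegree (Fin 2) K (k + e)).map (LinearMap.mulLeft K f)
  let B := (restrictTotalDegree (Fin 2) K (k + d)).map (LinearMap.mulLeft K g)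
  have hA : finrank K A = finrank K (restrictTotalDegree (Fin 2) K (k + e)) :=
    (Submodule.equivMapOfInjective _ (mul_right_injective₀ hf) _).finrank_eq.symm
  have hB : finrank K B = finrank K (restrictTotalDegree (Fin 2) K (k + d)) :=
    (Submodule.equivMapOfInjective _ (mul_right_injective₀ hg) _).finrank_eq.symm
  have hinf : A ⊓ B ≤ (restrictTotalDegree (Fin 2) K k).map (LinearMap.mulLeft K (f * g)) := by
    rintro _ ⟨⟨p, hp, rfl⟩, ⟨q, -, hpq⟩⟩
    obtain ⟨u, rfl⟩ : g ∣ p := hfg.symm.dvd_of_dvd_mul_left ⟨q, hpq.symm⟩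
    refine ⟨u, ?_, by simp⟩
    rw [SetLike.mem_coe, mem_restrictTotalDegree] at hp ⊢
    rcases eq_or_ne u 0 with rfl | hu
    · simp
    · rw [totalDegree_mul_of_isDomain hg hu] at hp
      omega
  have hsup : A ⊔ B ≤ restrictTotalDegree (Fin 2) K (k + d + e) := by
    refine sup_le ?_ ?_ <;> rintro _ ⟨p, hp, rfl⟩ <;>
      rw [SetLike.mem_coe, mem_restrictTotalDegree] at hp <;>
      exact (mem_restrictTotalDegree _ _ _).mpr ((totalDegree_mul _ p).trans (by omega))
  have hker : A ⊔ B ≤ LinearMap.ker (evalOn S) := by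
    refine sup_le ?_ ?_ <;> rintro _ ⟨p, -, rfl⟩ <;> ext ⟨s, hs⟩ <;> simp [hS s hs]
  have hdim := Submodule.finrank_sup_add_finrank_inf_eq A B
  have hev := Submodule.finrank_add_finrank_le_of_map_eq_top hsup hker
    (map_evalOn_restrictTotalDegree hSn)
  have hmul := (Submodule.finrank_mono hinf).trans (Submodule.finrank_map_le _ _)
  simp only [finrank_restrictTotalDegree, Fintype.card_fin, finrank_fintype_fun_eq_card,
    Fintype.card_coe] at hA hB hev hmul
  have := Nat.two_add_choose_mixed_difference k d e
  omega

theorem card_le_totalDegree_mul {f g : MvPolynomial (Fin 2) K} (hf : f ≠ 0) (hg : g ≠ 0)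
    (hfg : IsRelPrime f g) {S : Finset (Fin 2 → K)}
    (hS : ∀ s ∈ S, eval s f = 0 ∧ eval s g = 0) :
    S.card ≤ f.totalDegree * g.totalDegree := by
  by_contra! hlt
  obtain ⟨T, hTS, hT⟩ := exists_subset_card_eq hlt
  have := card_le_totalDegree_mul_of_card_le_succ hf hg hfg (fun s hs => hS s (hTS hs))
    (n := f.totalDegree * g.totalDegree + f.totalDegree + g.totalDegree) (by omega) (by omega)
  omega

end MvPolynomial

theorem Set.encard_le_coe_of_forall_finset_card_le {α : Type*} {s : Set α} {N : ℕ}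
    (h : ∀ t : Finset α, ↑t ⊆ s → t.card ≤ N) : s.encard ≤ N := by
  rw [encard, ENat.card]
  exact Cardinal.toENat_le_natCast.mpr (Cardinal.mk_le_iff_forall_finset_subset_card_le.mpr h)

/-- Bézout-type bound: two nonzero bivariate real polynomials of degree at
most 4 with no common irreducible factor have at most `16` common real zeros. -/
theorem stmt18 (f g : MvPolynomial (Fin 2) ℝ) (hf : f ≠ 0) (hg : g ≠ 0)
    (hfd : f.totalDegree ≤ 4) (hgd : g.totalDegree ≤ 4)
    (hcoprime : ¬ ∃ p : MvPolynomial (Fin 2) ℝ, Irreducible p ∧ p ∣ f ∧ p ∣ g) :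
    ({q : ℝ × ℝ | eval ![q.1, q.2] f = 0 ∧ eval ![q.1, q.2] g = 0}).Finite ∧
    ({q : ℝ × ℝ | eval ![q.1, q.2] f = 0 ∧ eval ![q.1, q.2] g = 0}).ncard ≤ 16 := by
  classical
  have hfg : IsRelPrime f g := WfDvdMonoid.isRelPrime_of_no_irreducible_factors
    (fun h => hf h.1) fun p hp hpf hpg => hcoprime ⟨p, hp, hpf, hpg⟩
  refine Set.encard_le_coe_iff_finite_ncard_le.mp
    (Set.encard_le_coe_of_forall_finset_card_le fun T hT => ?_)
  have hinj : Set.InjOn (fun q : ℝ × ℝ => ![q.1, q.2]) T :=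
    fun a _ b _ h => Prod.ext (congrFun h 0) (congrFun h 1)
  rw [← card_image_of_injOn hinj]
  calc _ ≤ f.totalDegree * g.totalDegree := card_le_totalDegree_mul hf hg hfg <| by
          rw [forall_mem_image]; exact fun q hq => hT hq
    _ ≤ 16 := Nat.mul_le_mul hfd hgd
end

section
/- Let κ and n be positive integers and suppose a set P of n points in the plane has all its distances to three fixed noncollinear points lying in a set of size κ, with Q = number of ordered pairs (q₁,q₂) of distinct points of P equidistant from the third fixed point. If Q ≤ C·κ^{8/3} and Q ≥ n²/(2κ) − n/2, then n = O(κ^{11/6}). -/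
/-!
Chaining the two bounds on `Q` and clearing the denominator `2κ` gives
`n² - κ n ≤ 2C κ^{1 + 8/3} ≤ (√(2C) K)²` with `K = κ^{11/6} ≥ κ`, whereas
`n > (√(2C) + 1) K` would force `n² - κ n ≥ n (n - K) > (√(2C) K)²`.
-/

lemma sq_sub_mul_le_of_div_sub_le {n x b : ℝ} (hx : 0 < x) (h : n ^ 2 / (2 * x) - n / 2 ≤ b) :
    n ^ 2 - x * n ≤ 2 * x * b := by
  calc n ^ 2 - x * n = 2 * x * (n ^ 2 / (2 * x) - n / 2) := by field_simp
    _ ≤ 2 * x * b := mul_le_mul_of_nonneg_left h (by positivity)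

lemma le_add_one_mul_of_sq_sub_mul_le {n x a K : ℝ} (hn : 0 ≤ n) (ha : 0 ≤ a) (hx : 0 ≤ x)
    (hxK : x ≤ K) (h : n ^ 2 - x * n ≤ (a * K) ^ 2) : n ≤ (a + 1) * K := by
  by_contra! hlt
  have haK : 0 ≤ a * K := mul_nonneg ha (hx.trans hxK)
  have hn_gt : a * K < n := by linarith [hx.trans hxK]
  have hnK_gt : a * K < n - K := by linarith
  have : (a * K) ^ 2 < n * (n - K) := by
    rw [sq]; exact mul_lt_mul'' hn_gt hnK_gt haK haK
  nlinarith [mul_le_mul_of_nonneg_right hxK hn]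

lemma rpow_eleven_sixths_sq {x : ℝ} (hx : 0 ≤ x) :
    (x ^ ((11 : ℝ) / 6)) ^ 2 = x * x ^ ((8 : ℝ) / 3) := by
  rw [← Real.rpow_mul_natCast hx, ← Real.rpow_one_add' hx (by norm_num)]
  norm_num

lemma le_of_div_sub_le_mul_rpow {n x c : ℝ} (hn : 0 ≤ n) (hx : 1 ≤ x)
    (h : n ^ 2 / (2 * x) - n / 2 ≤ c * x ^ ((8 : ℝ) / 3)) :
    n ≤ (√(2 * c) + 1) * x ^ ((11 : ℝ) / 6) := by
  have hx0 : 0 < x := one_pos.trans_le hx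
  refine le_add_one_mul_of_sq_sub_mul_le hn (Real.sqrt_nonneg _) hx0.le ?_ ?_
  · simpa using Real.rpow_le_rpow_of_exponent_le hx (show (1 : ℝ) ≤ 11 / 6 by norm_num)
  · have h2c : 2 * c ≤ √(2 * c) ^ 2 := Real.sq_sqrt' (x := 2 * c) ▸ le_max_left _ _
    calc n ^ 2 - x * n ≤ 2 * x * (c * x ^ ((8 : ℝ) / 3)) := sq_sub_mul_le_of_div_sub_le hx0 h
      _ = 2 * c * (x * x ^ ((8 : ℝ) / 3)) := by ring
      _ ≤ √(2 * c) ^ 2 * (x * x ^ ((8 : ℝ) / 3)) := by gcongr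
      _ = (√(2 * c) * x ^ ((11 : ℝ) / 6)) ^ 2 := by rw [mul_pow, rpow_eleven_sixths_sq hx0.le]

theorem stmt19_general (C : ℝ) :
    ∃ C' > (0 : ℝ), ∀ (n κ : ℕ), 0 < n → 0 < κ →
      ∀ (p₁ p₂ p₃ : EuclideanSpace ℝ (Fin 2)),
      ¬ Collinear ℝ ({p₁, p₂, p₃} : Set (EuclideanSpace ℝ (Fin 2))) →
      ∀ (P : Finset (EuclideanSpace ℝ (Fin 2))) (D : Finset ℝ) (Q : ℕ),
      P.card = n → D.card = κ →
      (∀ q ∈ P, dist p₁ q ∈ D ∧ dist p₂ q ∈ D ∧ dist p₃ q ∈ D) →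
      Q = ({qq ∈ P ×ˢ P | qq.1 ≠ qq.2 ∧ dist p₃ qq.1 = dist p₃ qq.2}).card →
      (Q : ℝ) ≤ C * (κ : ℝ) ^ ((8 : ℝ) / 3) →
      (n : ℝ) ^ 2 / (2 * κ) - (n : ℝ) / 2 ≤ (Q : ℝ) →
      (n : ℝ) ≤ C' * (κ : ℝ) ^ ((11 : ℝ) / 6) := by
  refine ⟨√(2 * C) + 1, by positivity, ?_⟩
  intro n κ _ hκ _ _ _ _ _ _ Q _ _ _ _ hQ_upper hQ_lower
  exact le_of_div_sub_le_mul_rpow n.cast_nonneg (Nat.one_le_cast.mpr hκ)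
    (hQ_lower.trans hQ_upper)

/-- If all distances from a set `P` of `n` plane points to three fixed
noncollinear points lie in a set `D` of size `κ`, and `Q`, the number of ordered pairs of
distinct points of `P` equidistant from the third point, satisfies `Q ≤ C κ^{8/3}` and
`Q ≥ n²/(2κ) − n/2`, then `n = O(κ^{11/6})` (with the constant depending only on `C`). -/
theorem stmt19 (C : ℝ) (hC : 0 < C) :
    ∃ C' > (0 : ℝ), ∀ (n κ : ℕ), 0 < n → 0 < κ →
      ∀ (p₁ p₂ p₃ : EuclideanSpace ℝ (Fin 2)),
      ¬ Collinear ℝ ({p₁, p₂, p₃} : Set (EuclideanSpace ℝ (Fin 2))) →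
      ∀ (P : Finset (EuclideanSpace ℝ (Fin 2))) (D : Finset ℝ) (Q : ℕ),
      P.card = n → D.card = κ →
      (∀ q ∈ P, dist p₁ q ∈ D ∧ dist p₂ q ∈ D ∧ dist p₃ q ∈ D) →
      Q = ({qq ∈ P ×ˢ P | qq.1 ≠ qq.2 ∧ dist p₃ qq.1 = dist p₃ qq.2}).card →
      (Q : ℝ) ≤ C * (κ : ℝ) ^ ((8 : ℝ) / 3) →
      (n : ℝ) ^ 2 / (2 * κ) - (n : ℝ) / 2 ≤ (Q : ℝ) →
      (n : ℝ) ≤ C' * (κ : ℝ) ^ ((11 : ℝ) / 6) :=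
  stmt19_general C
end
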